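/- Let α be irrational with β(α) = 0, and let θ ∈ ℝ be fixed with ε₀-resonances n₁, n₂, … (ordered by increasing modulus). Then there is a constant c > 0 (depending on ε₀) such that ln ‖2θ − n_j α‖_{ℝ/ℤ}^{-1} ≥ c|n_j| for all j, and ln ‖2θ − n_j α‖_{ℝ/ℤ}^{-1} = o(|n_{j+1}|) as j → ∞ (whenever n_{j+1} exists). -/

import Mathlib

/-!
For `k ≠ l` the triangle inequality gives `‖(k - l)α‖ ≤ ‖2θ - kα‖ + ‖2θ - lα‖`, while
`β(α) = 0` gives `‖mα‖ ≥ C_δ e^{-δ|m|}` for all `m ≠ 0`. So two distinct frequencies cannot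
both be exponentially close to `2θ`. With `l` a resonance of large modulus this rules out
`‖2θ - n_j α‖ = 0`, after which the lower bound is the resonance condition itself. With
`k = n_j`, `l = n_{j+1}`, minimality of `n_{j+1}` gives `‖2θ - n_{j+1} α‖ ≤ ‖2θ - n_j α‖`,
hence `2‖2θ - n_j α‖ ≥ C_δ e^{-2δ|n_{j+1}|}`.
-/

/-- Distance to the nearest integer. -/
noncomputable def distZ (x : ℝ) : ℝ := |x - round x|

/-- `k` is an `ε₀`-resonance for `(α, θ)`. -/
def IsResonance (α θ ε₀ : ℝ) (k : ℤ) : Prop :=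
  distZ (2 * θ - (k : ℝ) * α) ≤ Real.exp (-(k.natAbs : ℝ) * ε₀) ∧
    ∀ j : ℤ, |j| ≤ |k| → distZ (2 * θ - (k : ℝ) * α) ≤ distZ (2 * θ - (j : ℝ) * α)

open Filter Real

lemma distZ_nonneg (x : ℝ) : 0 ≤ distZ x := abs_nonneg _

lemma distZ_le_abs_sub_intCast (x : ℝ) (m : ℤ) : distZ x ≤ |x - m| := round_le x m

lemma distZ_neg_le (x : ℝ) : distZ (-x) ≤ distZ x := by
  calc distZ (-x) ≤ |-x - ((-round x : ℤ) : ℝ)| := distZ_le_abs_sub_intCast _ _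
    _ = distZ x := by rw [distZ, ← abs_neg]; push_cast; ring_nf

lemma distZ_neg (x : ℝ) : distZ (-x) = distZ x :=
  le_antisymm (distZ_neg_le x) (by simpa using distZ_neg_le (-x))

lemma distZ_sub_le (x y : ℝ) : distZ (x - y) ≤ distZ x + distZ y :=
  calc distZ (x - y) ≤ |(x - y) - ((round x - round y : ℤ) : ℝ)| :=
        distZ_le_abs_sub_intCast _ _
    _ = |(x - round x) - (y - round y)| := by push_cast; ring_nf
    _ ≤ distZ x + distZ y := abs_sub _ _

lemma distZ_natAbs_mul (α : ℝ) (m : ℤ) : distZ ((m.natAbs : ℝ) * α) = distZ ((m : ℝ) * α) := by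
  rcases Int.natAbs_eq m with h | h <;> conv_rhs => rw [h]
  · rw [Int.cast_natCast]
  · rw [Int.cast_neg, Int.cast_natCast, neg_mul, distZ_neg]

lemma distZ_intCast_mul_pos {α : ℝ} (hα : Irrational α) {m : ℤ} (hm : m ≠ 0) :
    0 < distZ ((m : ℝ) * α) := by
  rw [distZ, abs_pos, sub_ne_zero]
  exact (hα.intCast_mul hm).ne_int _

lemma exists_pos_forall_le_of_pos {u : ℕ → ℝ} (hu : ∀ k, 0 < k → 0 < u k) (K : ℕ) :
    ∃ d > 0, ∀ k, 0 < k → k < K → d ≤ u k := by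
  induction K with
  | zero => exact ⟨1, one_pos, fun k _ hk => absurd hk (Nat.not_lt_zero k)⟩
  | succ K ih =>
    obtain ⟨d, hd, hdu⟩ := ih
    rcases K.eq_zero_or_pos with rfl | hK
    · exact ⟨d, hd, fun k hk hk1 => absurd hk (by omega)⟩
    refine ⟨min d (u K), lt_min hd (hu K hK), fun k hk hkK => ?_⟩
    rcases Nat.lt_succ_iff_lt_or_eq.mp hkK with hlt | rfl
    · exact (min_le_left _ _).trans (hdu k hk hlt)
    · exact min_le_right _ _

lemma exists_pos_mul_exp_le_distZ {α : ℝ} (hα : Irrational α)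
    (hβ : ∀ δ > (0 : ℝ), ∃ K : ℕ, ∀ k : ℕ, K ≤ k → exp (-δ * k) ≤ distZ ((k : ℝ) * α))
    {δ : ℝ} (hδ : 0 < δ) :
    ∃ C > 0, ∀ m : ℤ, m ≠ 0 → C * exp (-δ * m.natAbs) ≤ distZ ((m : ℝ) * α) := by
  obtain ⟨K, hK⟩ := hβ δ hδ
  obtain ⟨d, hd, hdK⟩ := exists_pos_forall_le_of_pos (u := fun k => distZ ((k : ℝ) * α))
    (fun k hk => by exact_mod_cast distZ_intCast_mul_pos hα (Int.natCast_ne_zero.mpr hk.ne')) K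
  refine ⟨min d 1, lt_min hd one_pos, fun m hm => ?_⟩
  rw [← distZ_natAbs_mul]
  rcases lt_or_ge m.natAbs K with hlt | hge
  · calc min d 1 * exp (-δ * m.natAbs) ≤ d * 1 :=
          mul_le_mul (min_le_left _ _)
            (exp_le_one_iff.mpr (mul_nonpos_of_nonpos_of_nonneg (neg_nonpos.mpr hδ.le)
              (Nat.cast_nonneg _))) (exp_nonneg _) hd.le
      _ ≤ _ := by rw [mul_one]; exact hdK _ (Int.natAbs_pos.mpr hm) hlt
  · calc min d 1 * exp (-δ * m.natAbs) ≤ 1 * exp (-δ * m.natAbs) :=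
          mul_le_mul_of_nonneg_right (min_le_right _ _) (exp_nonneg _)
      _ ≤ _ := by rw [one_mul]; exact hK _ hge

lemma exists_pos_mul_exp_le_distZ_add {α : ℝ} (hα : Irrational α)
    (hβ : ∀ δ > (0 : ℝ), ∃ K : ℕ, ∀ k : ℕ, K ≤ k → exp (-δ * k) ≤ distZ ((k : ℝ) * α))
    (θ : ℝ) {δ : ℝ} (hδ : 0 < δ) :
    ∃ C > 0, ∀ k l : ℤ, k ≠ l → C * exp (-δ * (k.natAbs + l.natAbs)) ≤
      distZ (2 * θ - (k : ℝ) * α) + distZ (2 * θ - (l : ℝ) * α) := by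
  obtain ⟨C, hC, hCm⟩ := exists_pos_mul_exp_le_distZ hα hβ hδ
  refine ⟨C, hC, fun k l hkl => ?_⟩
  have hsub : ((k - l).natAbs : ℝ) ≤ k.natAbs + l.natAbs := by
    exact_mod_cast Int.natAbs_sub_le k l
  calc C * exp (-δ * (k.natAbs + l.natAbs)) ≤ C * exp (-δ * (k - l).natAbs) := by
        gcongr C * exp ?_; nlinarith
    _ ≤ distZ (((k - l : ℤ) : ℝ) * α) := hCm _ (sub_ne_zero.mpr hkl)
    _ = distZ ((2 * θ - (l : ℝ) * α) - (2 * θ - (k : ℝ) * α)) := by push_cast; ring_nf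
    _ ≤ _ := (distZ_sub_le _ _).trans_eq (add_comm _ _)

lemma Int.tendsto_natAbs_cofinite : Tendsto Int.natAbs cofinite atTop := by
  rw [← Nat.cofinite_eq_atTop]
  refine Tendsto.cofinite_of_finite_preimage_singleton fun b => ?_
  refine ((Set.toFinite {(b : ℤ), -(b : ℤ)}).subset fun m hm => ?_).to_subtype
  have hm' : m.natAbs = b := hm
  rcases Int.natAbs_eq m with h | h <;> rw [hm'] at h <;> simp [h]

lemma tendsto_natAbs_of_injective {n : ℕ → ℤ} (hinj : Function.Injective n) :
    Tendsto (fun i => ((n i).natAbs : ℝ)) atTop atTop :=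
  tendsto_natCast_atTop_atTop.comp <|
    Int.tendsto_natAbs_cofinite.comp (Nat.cofinite_eq_atTop ▸ hinj.tendsto_cofinite)

lemma log_inv_le_of_mul_exp_le {c x y : ℝ} (hc : 0 < c) (h : c * exp (-x) ≤ y) :
    log y⁻¹ ≤ x - log c := by
  have hpos : 0 < c * exp (-x) := by positivity
  have := log_le_log hpos h
  rw [log_mul hc.ne' (exp_pos _).ne', log_exp] at this
  rw [log_inv]; linarith

lemma mul_natAbs_le_log_inv_of_isResonance {α θ ε₀ : ℝ} {k : ℤ} (hk : IsResonance α θ ε₀ k)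
    (hpos : 0 < distZ (2 * θ - (k : ℝ) * α)) :
    ε₀ * k.natAbs ≤ log (distZ (2 * θ - (k : ℝ) * α))⁻¹ := by
  rw [log_inv, le_neg, ← log_exp (-(ε₀ * _))]
  exact log_le_log hpos (by simpa [mul_comm] using hk.1)

section Resonances

variable {α θ ε₀ : ℝ} {n : ℕ → ℤ}
  (hα : Irrational α)
  (hβ : ∀ δ > (0 : ℝ), ∃ K : ℕ, ∀ k : ℕ, K ≤ k → exp (-δ * k) ≤ distZ ((k : ℝ) * α))
  (hinj : Function.Injective n)
include hα hβ hinj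

lemma distZ_pos_of_isResonance (hε₀ : 0 < ε₀) (hres : ∀ j, IsResonance α θ ε₀ (n j)) (j : ℕ) :
    0 < distZ (2 * θ - (n j : ℝ) * α) := by
  refine (distZ_nonneg _).lt_of_ne fun hzero => ?_
  obtain ⟨C, hC, hCkl⟩ := exists_pos_mul_exp_le_distZ_add hα hβ θ (half_pos hε₀)
  have hsize := tendsto_natAbs_of_injective hinj
  obtain ⟨i, hij, hi⟩ := ((hsize.eventually_gt_atTop ((n j).natAbs : ℝ)).and
    (hsize.eventually_gt_atTop ((n j).natAbs - 2 * log C / ε₀))).exists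
  have hne : n i ≠ n j := fun h => by simp [h] at hij
  have hεi : C * exp (-(ε₀ / 2) * ((n i).natAbs + (n j).natAbs)) ≤ exp (-((n i).natAbs) * ε₀) :=
    calc _ ≤ distZ (2 * θ - (n i : ℝ) * α) + distZ (2 * θ - (n j : ℝ) * α) := hCkl _ _ hne
      _ = distZ (2 * θ - (n i : ℝ) * α) := by rw [← hzero, add_zero]
      _ ≤ _ := (hres i).1
  have hlog := log_le_log (by positivity) hεi
  rw [log_mul hC.ne' (exp_pos _).ne', log_exp, log_exp] at hlog
  have hi' : ε₀ * (n j).natAbs - 2 * log C < ε₀ * (n i).natAbs := by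
    have := mul_lt_mul_of_pos_left hi hε₀
    rwa [mul_sub, mul_div_cancel₀ _ hε₀.ne'] at this
  nlinarith

lemma eventually_log_inv_le_mul_natAbs_succ
    (hmono : ∀ j : ℕ, (n j).natAbs ≤ (n (j + 1)).natAbs)
    (hres : ∀ j, IsResonance α θ ε₀ (n j)) {δ : ℝ} (hδ : 0 < δ) :
    ∀ᶠ j in atTop,
      log (distZ (2 * θ - (n j : ℝ) * α))⁻¹ ≤ δ * ((n (j + 1)).natAbs : ℝ) := by
  obtain ⟨C, hC, hCkl⟩ := exists_pos_mul_exp_le_distZ_add hα hβ θ (by positivity : 0 < δ / 4)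
  have hsize := (tendsto_natAbs_of_injective hinj).comp (tendsto_add_atTop_nat 1)
  filter_upwards [hsize.eventually_ge_atTop (-2 * log (C / 2) / δ)] with j hj
  set A : ℝ := ((n (j + 1)).natAbs : ℝ)
  have hA : -log (C / 2) ≤ δ / 2 * A := by
    rw [Function.comp_apply, div_le_iff₀ hδ] at hj; linarith
  have hle : ((n j).natAbs : ℝ) ≤ A := Nat.cast_le.mpr (hmono j)
  have hmin : distZ (2 * θ - (n (j + 1) : ℝ) * α) ≤ distZ (2 * θ - (n j : ℝ) * α) :=
    (hres (j + 1)).2 (n j) (by rw [Int.abs_eq_natAbs, Int.abs_eq_natAbs]; exact_mod_cast hmono j)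
  have hne : n j ≠ n (j + 1) := hinj.ne (by omega)
  have hlow : C / 2 * exp (-(δ / 2 * A)) ≤ distZ (2 * θ - (n j : ℝ) * α) :=
    calc C / 2 * exp (-(δ / 2 * A)) ≤ C / 2 * exp (-(δ / 4) * ((n j).natAbs + A)) := by
          gcongr C / 2 * exp ?_; nlinarith
      _ ≤ _ := by linarith [hCkl _ _ hne]
  calc log (distZ (2 * θ - (n j : ℝ) * α))⁻¹ ≤ δ / 2 * A - log (C / 2) :=
        log_inv_le_of_mul_exp_le (by positivity) hlow
    _ ≤ δ * A := by linarith

end Resonances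

theorem stmt12_general (α : ℝ) (hirr : Irrational α)
    (hβ : ∀ δ > (0 : ℝ), ∃ K : ℕ, ∀ k : ℕ, K ≤ k →
      Real.exp (-δ * k) ≤ distZ ((k : ℝ) * α))
    (θ ε₀ : ℝ) (hε₀ : 0 < ε₀) (n : ℕ → ℤ) (hinj : Function.Injective n)
    (hmono : ∀ j : ℕ, (n j).natAbs ≤ (n (j + 1)).natAbs)
    (hres : ∀ j : ℕ, IsResonance α θ ε₀ (n j)) :
    (∃ c > (0 : ℝ), ∀ j : ℕ,
        c * ((n j).natAbs : ℝ) ≤ Real.log (distZ (2 * θ - (n j : ℝ) * α))⁻¹) ∧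
      ∀ δ > (0 : ℝ), ∃ J : ℕ, ∀ j ≥ J,
        Real.log (distZ (2 * θ - (n j : ℝ) * α))⁻¹ ≤ δ * ((n (j + 1)).natAbs : ℝ) :=
  ⟨⟨ε₀, hε₀, fun j => mul_natAbs_le_log_inv_of_isResonance (hres j)
      (distZ_pos_of_isResonance hirr hβ hinj hε₀ hres j)⟩,
    fun _ hδ => eventually_atTop.mp
      (eventually_log_inv_le_mul_natAbs_succ hirr hβ hinj hmono hres hδ)⟩

/-- Lemma `following resonance`: lower and upper bounds on the resonance strength. -/
theorem stmt12 (α : ℝ) (hirr : Irrational α)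
    (hβ : ∀ δ > (0 : ℝ), ∃ K : ℕ, ∀ k : ℕ, K ≤ k →
      Real.exp (-δ * k) ≤ distZ ((k : ℝ) * α))
    (θ ε₀ : ℝ) (hε₀ : 0 < ε₀) (n : ℕ → ℤ) (hinj : Function.Injective n)
    (hmono : ∀ j : ℕ, (n j).natAbs ≤ (n (j + 1)).natAbs)
    (hres : ∀ j : ℕ, IsResonance α θ ε₀ (n j))
    (hall : ∀ k : ℤ, IsResonance α θ ε₀ k → ∃ j : ℕ, n j = k) :
    (∃ c > (0 : ℝ), ∀ j : ℕ,
        c * ((n j).natAbs : ℝ) ≤ Real.log (distZ (2 * θ - (n j : ℝ) * α))⁻¹) ∧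
      ∀ δ > (0 : ℝ), ∃ J : ℕ, ∀ j ≥ J,
        Real.log (distZ (2 * θ - (n j : ℝ) * α))⁻¹ ≤ δ * ((n (j + 1)).natAbs : ℝ) :=
  stmt12_general α hirr hβ θ ε₀ hε₀ n hinj hmono hres
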